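/- For every r ≥ 2 and x, y ∈ (0,1], T^r(x,y) ≥ c · exp(-β/(2x)) · ∫₀¹ exp(-β/(2x'')) T^{r-2}(x'', y) exp(-β/(2y)) dx'', where c := ∫₀¹ exp(-(β+2γ)/u) du > 0. -/

import Mathlib

open Real

/-- The Coulomb transfer kernel. -/
noncomputable def Q (β γ x y : ℝ) : ℝ := exp (-β/(2*x) - β/(2*y) - γ/(x+y))

/-- The `r`-fold transfer integral of `Q`. -/
noncomputable def T (β γ : ℝ) : ℕ → ℝ → ℝ → ℝ
  | 0 => fun x y => Q β γ x y
  | r + 1 => fun x y => ∫ u in (0:ℝ)..1, Q β γ x u * T β γ r u y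

open MeasureTheory

lemma Q_nonneg (β γ x y : ℝ) : 0 ≤ Q β γ x y := (exp_pos _).le

lemma Q_le_one {β γ x y : ℝ} (hβ : 0 < β) (hγ : 0 ≤ γ) (hx : 0 ≤ x) (hy : 0 ≤ y) :
    Q β γ x y ≤ 1 := by
  rw [Q]
  apply exp_le_one_iff.mpr
  have h1 : 0 ≤ β/(2*x) := div_nonneg hβ.le (by linarith)
  have h2 : 0 ≤ β/(2*y) := div_nonneg hβ.le (by linarith)
  have h3 : 0 ≤ γ/(x+y) := div_nonneg hγ (by linarith)
  simp only [neg_div]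
  linarith

lemma T_nonneg (β γ : ℝ) (r : ℕ) : ∀ x y, 0 ≤ T β γ r x y := by
  induction r with
  | zero => intro x y; exact Q_nonneg β γ x y
  | succ r ih =>
    intro x y
    simp only [T]
    exact intervalIntegral.integral_nonneg zero_le_one
      fun u _ => mul_nonneg (Q_nonneg _ _ _ _) (ih u y)

lemma T_le_one {β γ : ℝ} (hβ : 0 < β) (hγ : 0 ≤ γ) (r : ℕ) :
    ∀ x y, 0 ≤ x → 0 ≤ y → T β γ r x y ≤ 1 := by
  induction r with
  | zero => intro x y hx hy; exact Q_le_one hβ hγ hx hy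
  | succ r ih =>
    intro x y hx hy
    simp only [T]
    have h := intervalIntegral.norm_integral_le_of_norm_le_const (C := 1)
      (f := fun u => Q β γ x u * T β γ r u y) (a := (0:ℝ)) (b := 1) ?_
    · calc (∫ u in (0:ℝ)..1, Q β γ x u * T β γ r u y)
          ≤ ‖∫ u in (0:ℝ)..1, Q β γ x u * T β γ r u y‖ := le_abs_self _
        _ ≤ 1 * |1 - 0| := h
        _ = 1 := by norm_num
    · intro u hu
      rw [Set.uIoc_of_le zero_le_one] at hu
      have hu0 : 0 < u := hu.1
      have h1 : 0 ≤ Q β γ x u * T β γ r u y :=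
        mul_nonneg (Q_nonneg _ _ _ _) (T_nonneg β γ r u y)
      rw [Real.norm_eq_abs, abs_of_nonneg h1]
      exact mul_le_one₀ (Q_le_one hβ hγ hx hu0.le) (T_nonneg β γ r u y)
        (ih u y hu0.le hy)

lemma measurable_Q (β γ : ℝ) : Measurable fun p : ℝ × ℝ => Q β γ p.1 p.2 := by
  unfold Q
  exact (Measurable.sub (Measurable.sub
    (measurable_const.div (measurable_const.mul measurable_fst))
    (measurable_const.div (measurable_const.mul measurable_snd)))
    (measurable_const.div (measurable_fst.add measurable_snd))).exp

lemma measurable_T (β γ : ℝ) : ∀ r, Measurable fun p : ℝ × ℝ => T β γ r p.1 p.2 := by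
  intro r
  induction r with
  | zero => exact measurable_Q β γ
  | succ r ih =>
    have heq : (fun p : ℝ × ℝ => T β γ (r+1) p.1 p.2)
        = fun p => ∫ u in Set.Ioc (0:ℝ) 1, Q β γ p.1 u * T β γ r u p.2 := by
      funext p
      simp only [T]
      rw [intervalIntegral.integral_of_le zero_le_one]
    rw [heq]
    have hm : Measurable fun q : (ℝ × ℝ) × ℝ => Q β γ q.1.1 q.2 * T β γ r q.2 q.1.2 :=
      ((measurable_Q β γ).comp (measurable_fst.fst.prodMk measurable_snd)).mul
        (ih.comp (measurable_snd.prodMk measurable_fst.snd))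
    exact (hm.stronglyMeasurable.integral_prod_right').measurable

lemma measurable_T_left (β γ : ℝ) (r : ℕ) (y : ℝ) :
    Measurable fun u => T β γ r u y :=
  (measurable_T β γ r).comp (measurable_id.prodMk measurable_const)

lemma measurable_Q_right (β γ x : ℝ) : Measurable fun u => Q β γ x u := by
  unfold Q
  exact (Measurable.sub (Measurable.sub measurable_const
    (measurable_const.div (measurable_const.mul measurable_id)))
    (measurable_const.div (measurable_const.add measurable_id))).exp

lemma integrableOn_Ioc_of_bounded {f : ℝ → ℝ} (hm : Measurable f)
    (hb : ∀ u ∈ Set.Ioc (0:ℝ) 1, |f u| ≤ 1) : IntegrableOn f (Set.Ioc 0 1) := by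
  have hae : ∀ᵐ u ∂(volume.restrict (Set.Ioc (0:ℝ) 1)), ‖f u‖ ≤ 1 :=
    (ae_restrict_iff' measurableSet_Ioc).mpr (ae_of_all _ fun u hu => hb u hu)
  exact Integrable.mono' (integrable_const 1) hm.aestronglyMeasurable hae

lemma Q_lb_left {β γ x u : ℝ} (hγ : 0 ≤ γ) (hx : 0 < x) (hu : 0 < u) :
    exp (-β/(2*x)) * exp (-β/(2*u) - γ/u) ≤ Q β γ x u := by
  rw [Q, ← exp_add]
  apply exp_le_exp.mpr
  have h : γ/(x+u) ≤ γ/u := by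
    apply div_le_div_of_nonneg_left hγ hu (by linarith)
  simp only [neg_div]
  linarith

lemma Q_lb_right {β γ u v : ℝ} (hγ : 0 ≤ γ) (hu : 0 < u) (hv : 0 < v) :
    exp (-β/(2*u) - γ/u) * exp (-β/(2*v)) ≤ Q β γ u v := by
  rw [Q, ← exp_add]
  apply exp_le_exp.mpr
  have h : γ/(u+v) ≤ γ/u := by
    apply div_le_div_of_nonneg_left hγ hu (by linarith)
  simp only [neg_div]
  linarith

theorem T_lower_bound (β γ : ℝ) (hβ : 0 < β) (hγ : 0 ≤ γ) (r : ℕ) (hr : 2 ≤ r)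
    (x y : ℝ) (hx : x ∈ Set.Ioc (0:ℝ) 1) (hy : y ∈ Set.Ioc (0:ℝ) 1) :
    (∫ u in (0:ℝ)..1, exp (-(β + 2*γ)/u)) *
        (exp (-β/(2*x)) *
          ∫ x'' in (0:ℝ)..1, exp (-β/(2*x'')) * T β γ (r-2) x'' y * exp (-β/(2*y)))
      ≤ T β γ r x y := by
  obtain ⟨hx0, hx1⟩ := hx
  obtain ⟨hy0, hy1⟩ := hy
  obtain ⟨s, rfl⟩ : ∃ s, r = s + 2 := ⟨r - 2, by omega⟩
  have hs2 : s + 2 - 2 = s := by omega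
  rw [hs2]
  set J := ∫ x'' in (0:ℝ)..1, exp (-β/(2*x'')) * T β γ s x'' y * exp (-β/(2*y)) with hJdef
  have hJ0 : 0 ≤ J :=
    intervalIntegral.integral_nonneg zero_le_one fun u _ =>
      mul_nonneg (mul_nonneg (exp_pos _).le (T_nonneg β γ s u y)) (exp_pos _).le
  have hey : exp (-β/(2*y)) ≤ 1 := by
    apply exp_le_one_iff.mpr
    have : 0 ≤ β/(2*y) := div_nonneg hβ.le (by linarith)
    simp only [neg_div]
    linarith
  -- Step 1
  have step1 : ∀ u ∈ Set.Ioc (0:ℝ) 1, exp (-β/(2*u) - γ/u) * J ≤ T β γ (s+1) u y := by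
    intro u hu
    have hu0 := hu.1
    have hTs1 : T β γ (s+1) u y = ∫ v in Set.Ioc (0:ℝ) 1, Q β γ u v * T β γ s v y := by
      simp only [T]
      rw [intervalIntegral.integral_of_le zero_le_one]
    have hJ' : exp (-β/(2*u) - γ/u) * J
        = ∫ v in Set.Ioc (0:ℝ) 1,
            exp (-β/(2*u) - γ/u) * (exp (-β/(2*v)) * T β γ s v y * exp (-β/(2*y))) := by
      rw [hJdef, intervalIntegral.integral_of_le zero_le_one, ← integral_const_mul]
    rw [hTs1, hJ']
    apply setIntegral_mono_on
    · apply integrableOn_Ioc_of_bounded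
      · exact measurable_const.mul
          (((measurable_const.div (measurable_const.mul measurable_id)).exp.mul
            (measurable_T_left β γ s y)).mul measurable_const)
      · intro v hv
        have hv0 := hv.1
        have e1 : exp (-β/(2*u) - γ/u) ≤ 1 := by
          apply exp_le_one_iff.mpr
          have h1 : 0 ≤ β/(2*u) := div_nonneg hβ.le (by linarith)
          have h2 : 0 ≤ γ/u := div_nonneg hγ hu0.le
          simp only [neg_div]
          linarith
        have e2 : exp (-β/(2*v)) ≤ 1 := by
          apply exp_le_one_iff.mpr
          have : 0 ≤ β/(2*v) := div_nonneg hβ.le (by linarith)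
          simp only [neg_div]
          linarith
        have t1 := T_nonneg β γ s v y
        have t2 := T_le_one hβ hγ s v y hv0.le hy0.le
        rw [abs_of_nonneg (by positivity)]
        exact mul_le_one₀ e1 (by positivity)
          (mul_le_one₀ (mul_le_one₀ e2 t1 t2) (exp_pos _).le hey)
    · apply integrableOn_Ioc_of_bounded
      · exact (measurable_Q_right β γ u).mul (measurable_T_left β γ s y)
      · intro v hv
        have hv0 := hv.1
        rw [abs_of_nonneg (mul_nonneg (Q_nonneg _ _ _ _) (T_nonneg β γ s v y))]
        exact mul_le_one₀ (Q_le_one hβ hγ hu0.le hv0.le) (T_nonneg β γ s v y)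
          (T_le_one hβ hγ s v y hv0.le hy0.le)
    · exact measurableSet_Ioc
    · intro v hv
      have hv0 := hv.1
      have t1 := T_nonneg β γ s v y
      calc exp (-β/(2*u) - γ/u) * (exp (-β/(2*v)) * T β γ s v y * exp (-β/(2*y)))
          ≤ exp (-β/(2*u) - γ/u) * (exp (-β/(2*v)) * T β γ s v y) := by
            apply mul_le_mul_of_nonneg_left _ (exp_pos _).le
            exact mul_le_of_le_one_right (mul_nonneg (exp_pos _).le t1) hey
        _ = (exp (-β/(2*u) - γ/u) * exp (-β/(2*v))) * T β γ s v y := by ring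
        _ ≤ Q β γ u v * T β γ s v y :=
            mul_le_mul_of_nonneg_right (Q_lb_right hγ hu0 hv0) t1
  -- Main step
  have main : ∀ u ∈ Set.Ioc (0:ℝ) 1,
      (exp (-β/(2*x)) * J) * exp (-(β + 2*γ)/u) ≤ Q β γ x u * T β γ (s+1) u y := by
    intro u hu
    have hu0 := hu.1
    have key : (exp (-β/(2*x)) * J) * exp (-(β + 2*γ)/u)
        = (exp (-β/(2*x)) * exp (-β/(2*u) - γ/u)) * (exp (-β/(2*u) - γ/u) * J) := by
      have hne : u ≠ 0 := ne_of_gt hu0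
      rw [show -(β + 2*γ)/u = (-β/(2*u) - γ/u) + (-β/(2*u) - γ/u) by field_simp; ring,
        exp_add]
      ring
    rw [key]
    exact mul_le_mul (Q_lb_left hγ hx0 hu0) (step1 u hu)
      (mul_nonneg (exp_pos _).le hJ0) (Q_nonneg _ _ _ _)
  have hT2 : T β γ (s+2) x y = ∫ u in Set.Ioc (0:ℝ) 1, Q β γ x u * T β γ (s+1) u y := by
    simp only [T]
    rw [intervalIntegral.integral_of_le zero_le_one]
  have hLHS : (∫ u in (0:ℝ)..1, exp (-(β + 2*γ)/u)) * (exp (-β/(2*x)) * J)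
      = ∫ u in Set.Ioc (0:ℝ) 1, (exp (-β/(2*x)) * J) * exp (-(β + 2*γ)/u) := by
    rw [intervalIntegral.integral_of_le zero_le_one, integral_const_mul]
    ring
  rw [hT2, hLHS]
  apply setIntegral_mono_on
  · exact (integrableOn_Ioc_of_bounded
      ((measurable_const.div measurable_id).exp)
      (fun u hu => by
        have hu0 := hu.1
        rw [abs_of_nonneg (exp_pos _).le]
        apply exp_le_one_iff.mpr
        have : 0 ≤ (β + 2*γ)/u := div_nonneg (by linarith) hu0.le
        show -(β + 2*γ)/u ≤ 0
        rw [neg_div]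
        linarith)).const_mul _
  · apply integrableOn_Ioc_of_bounded
    · exact (measurable_Q_right β γ x).mul (measurable_T_left β γ (s+1) y)
    · intro u hu
      have hu0 := hu.1
      rw [abs_of_nonneg (mul_nonneg (Q_nonneg _ _ _ _) (T_nonneg β γ (s+1) u y))]
      exact mul_le_one₀ (Q_le_one hβ hγ hx0.le hu0.le) (T_nonneg β γ (s+1) u y)
        (T_le_one hβ hγ (s+1) u y hu0.le hy0.le)
  · exact measurableSet_Ioc
  · exact main
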